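/- arXiv:2109.07057 — 2 statements merged into one kernel-verified Lean document; each statement's English description precedes it below -/
import Mathlib

section
/- Let A : [0,∞) → ℝ be continuous, C¹ on (0,∞), with A(0)=0, A(s)>0 for s>0, and suppose s·A'(s) ≥ α·A(s) for all s>0, where α ∈ (0,1]. Define 𝒜 : ℝⁿ → ℝⁿ by 𝒜(0)=0 and 𝒜(v) = (A(|v|)/|v|)·v for v ≠ 0. If in addition A(s) ≥ D₁·s^(p-1) for all s ≥ 0 with D₁ > 0 and p ≥ 2, then there exists a constant c₁ > 0 (depending on n, p, α, D₁) such that (𝒜(v₂) − 𝒜(v₁)) · (v₂ − v₁) ≥ c₁·|v₂ − v₁|^p for all v₁, v₂ ∈ ℝⁿ. -/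
open scoped RealInnerProductSpace

/-!
The growth condition `s A'(s) ≥ α A(s)` says that `A(s) / s^α` is nondecreasing; combined with
Bernoulli's inequality `(a/b)^α ≤ 1 - α (1 - a/b)` it gives `A(b) - A(a) ≥ α (A(b)/b) (b - a)`
for `0 ≤ a ≤ b`. For `𝒜 v = (A|v|/|v|) v` and `|x| ≤ |y|`, the difference
`(𝒜 y - 𝒜 x)·(y - x) - κ |y - x|²` is a nonnegative multiple of `|x||y| - x·y` plus a purely
radial term, and both are nonnegative for `κ = (α/2) A(|y|)/|y| ≥ (α/2) D₁ |y|^(p-2)`.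
Finally `|y - x| ≤ 2|y|` turns `|y|^(p-2) |y - x|²` into `2^(2-p) |y - x|^p`.
-/

theorem monotoneOn_div_rpow_of_mul_le_mul_deriv {A : ℝ → ℝ} {α : ℝ}
    (hA : ∀ s, 0 < s → DifferentiableAt ℝ A s)
    (hgrow : ∀ s, 0 < s → α * A s ≤ s * deriv A s) :
    MonotoneOn (fun s => A s / s ^ α) (Set.Ioi 0) := by
  have hderiv : ∀ s, 0 < s → HasDerivAt (fun s => A s / s ^ α)
      ((deriv A s * s ^ α - A s * (α * s ^ (α - 1))) / (s ^ α) ^ 2) s := fun s hs =>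
    (hA s hs).hasDerivAt.div (Real.hasDerivAt_rpow_const (Or.inl hs.ne'))
      (Real.rpow_pos_of_pos hs α).ne'
  refine monotoneOn_of_deriv_nonneg (convex_Ioi 0)
    (fun s hs => (hderiv s hs).continuousAt.continuousWithinAt) ?_ ?_ <;> rw [interior_Ioi]
  · exact fun s hs => (hderiv s hs).differentiableAt.differentiableWithinAt
  · intro s hs
    have hs' : s ^ α = s * s ^ (α - 1) := by
      rw [Real.rpow_sub_one (ne_of_gt hs), mul_div_cancel₀ _ (ne_of_gt hs)]
    rw [(hderiv s hs).deriv, hs']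
    have := mul_le_mul_of_nonneg_right (hgrow s hs) (Real.rpow_nonneg hs.le (α - 1))
    exact div_nonneg (by nlinarith) (sq_nonneg _)

theorem mul_div_mul_sub_le_sub_of_mul_le_mul_deriv {A : ℝ → ℝ} {α : ℝ}
    (hα0 : 0 ≤ α) (hα1 : α ≤ 1) (hA0 : A 0 = 0)
    (hA : ∀ s, 0 < s → DifferentiableAt ℝ A s)
    (hgrow : ∀ s, 0 < s → α * A s ≤ s * deriv A s)
    {a b : ℝ} (ha : 0 ≤ a) (hab : a ≤ b) (hb : 0 ≤ A b) :
    α * (A b / b) * (b - a) ≤ A b - A a := by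
  rcases ha.eq_or_lt with rfl | ha
  · rw [hA0, sub_zero, sub_zero, mul_assoc, div_mul_cancel_of_imp (fun hb => hb ▸ hA0)]
    exact mul_le_of_le_one_left hb hα1
  have hb0 : 0 < b := ha.trans_le hab
  have hratio : A a / a ^ α ≤ A b / b ^ α :=
    monotoneOn_div_rpow_of_mul_le_mul_deriv hA hgrow ha hb0 hab
  have hbern : (a / b) ^ α ≤ 1 + α * (a / b - 1) := by
    simpa using rpow_one_add_le_one_add_mul_self (s := a / b - 1)
      (by linarith [div_nonneg ha.le hb0.le]) hα0 hα1
  calc α * (A b / b) * (b - a) = A b - A b * (1 + α * (a / b - 1)) := by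
        field_simp; ring
    _ ≤ A b - A b * (a / b) ^ α := by gcongr
    _ ≤ A b - A a := by
        have h := (div_le_iff₀ (Real.rpow_pos_of_pos ha α)).1 hratio
        rw [Real.div_rpow ha.le hb0.le]
        linarith [show A b * (a ^ α / b ^ α) = A b / b ^ α * a ^ α by ring]

theorem two_rpow_mul_rpow_le_rpow_mul_sq {p b d : ℝ} (hp : 2 ≤ p) (hd : 0 ≤ d)
    (hdb : d ≤ 2 * b) : 2 ^ (2 - p) * d ^ p ≤ b ^ (p - 2) * d ^ 2 := by
  have hb : 0 ≤ b := by linarith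
  have hsplit : d ^ p = d ^ (p - 2) * d ^ 2 := by
    rw [← Real.rpow_natCast, ← Real.rpow_add' hd (by push_cast; linarith)]; norm_num
  have hmono : d ^ (p - 2) ≤ 2 ^ (p - 2) * b ^ (p - 2) := by
    rw [← Real.mul_rpow zero_le_two hb]
    exact Real.rpow_le_rpow hd hdb (by linarith)
  have h2 : (2 : ℝ) ^ (2 - p) * 2 ^ (p - 2) = 1 := by
    rw [← Real.rpow_add two_pos]; norm_num
  calc 2 ^ (2 - p) * d ^ p ≤ 2 ^ (2 - p) * (2 ^ (p - 2) * b ^ (p - 2)) * d ^ 2 := by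
        rw [hsplit, ← mul_assoc]; gcongr
    _ = b ^ (p - 2) * d ^ 2 := by rw [← mul_assoc, h2, one_mul]

section InnerProductSpace

variable {E : Type*} [NormedAddCommGroup E] [InnerProductSpace ℝ E]

theorem mul_norm_sub_sq_le_inner_smul_sub_smul (x y : E) {κ l m : ℝ} (hκ : 2 * κ ≤ l + m)
    (hnorm : κ * (‖y‖ - ‖x‖) ^ 2 ≤ (‖y‖ - ‖x‖) * (m * ‖y‖ - l * ‖x‖)) :
    κ * ‖y - x‖ ^ 2 ≤ ⟪m • y - l • x, y - x⟫ := by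
  have hcs : ⟪x, y⟫ ≤ ‖x‖ * ‖y‖ := real_inner_le_norm x y
  have hexpand : ⟪m • y - l • x, y - x⟫ - κ * ‖y - x‖ ^ 2
      = (l + m - 2 * κ) * (‖x‖ * ‖y‖ - ⟪x, y⟫)
        + ((‖y‖ - ‖x‖) * (m * ‖y‖ - l * ‖x‖) - κ * (‖y‖ - ‖x‖) ^ 2) := by
    rw [norm_sub_sq_real]
    simp only [inner_sub_left, inner_sub_right, real_inner_smul_left, real_inner_self_eq_norm_sq,
      real_inner_comm x y]
    ring
  nlinarith [mul_nonneg (sub_nonneg.2 hκ) (sub_nonneg.2 hcs)]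

theorem half_mul_div_mul_norm_sub_sq_le_inner {A : ℝ → ℝ} {α : ℝ} (hα0 : 0 ≤ α) (hα1 : α ≤ 1)
    (hA0 : A 0 = 0) (hA_nonneg : ∀ s, 0 ≤ s → 0 ≤ A s)
    (hA_sub : ∀ a b, 0 ≤ a → a ≤ b → α * (A b / b) * (b - a) ≤ A b - A a)
    {x y : E} (hxy : ‖x‖ ≤ ‖y‖) :
    α / 2 * (A ‖y‖ / ‖y‖) * ‖y - x‖ ^ 2
      ≤ ⟪(A ‖y‖ / ‖y‖) • y - (A ‖x‖ / ‖x‖) • x, y - x⟫ := by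
  have hx : 0 ≤ A ‖x‖ / ‖x‖ := div_nonneg (hA_nonneg _ (norm_nonneg x)) (norm_nonneg x)
  have hy : 0 ≤ A ‖y‖ / ‖y‖ := div_nonneg (hA_nonneg _ (norm_nonneg y)) (norm_nonneg y)
  have hcancel (v : E) : A ‖v‖ / ‖v‖ * ‖v‖ = A ‖v‖ :=
    div_mul_cancel_of_imp fun hv => hv ▸ hA0
  refine mul_norm_sub_sq_le_inner_smul_sub_smul x y (by nlinarith) ?_
  rw [hcancel, hcancel]
  have hsub := hA_sub _ _ (norm_nonneg x) hxy
  have hd : 0 ≤ ‖y‖ - ‖x‖ := sub_nonneg.2 hxy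
  nlinarith [mul_le_mul_of_nonneg_left hsub hd,
    mul_nonneg (mul_nonneg hα0 hy) (sq_nonneg (‖y‖ - ‖x‖))]

theorem mul_norm_sub_rpow_le_inner_radial {A : ℝ → ℝ} {p α D₁ : ℝ} (hp : 2 ≤ p)
    (hα0 : 0 ≤ α) (hα1 : α ≤ 1) (hD₁ : 0 ≤ D₁) (hA0 : A 0 = 0)
    (hA : ∀ s, 0 < s → DifferentiableAt ℝ A s)
    (hgrow : ∀ s, 0 < s → α * A s ≤ s * deriv A s)
    (hlow : ∀ s, 0 ≤ s → D₁ * s ^ (p - 1) ≤ A s) {x y : E} (hxy : ‖x‖ ≤ ‖y‖) :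
    α / 2 * D₁ * 2 ^ (2 - p) * ‖y - x‖ ^ p
      ≤ ⟪(A ‖y‖ / ‖y‖) • y - (A ‖x‖ / ‖x‖) • x, y - x⟫ := by
  rcases eq_or_ne y 0 with rfl | hy
  · rw [norm_zero, norm_le_zero_iff] at hxy
    simp [hxy, Real.zero_rpow (by linarith : p ≠ 0)]
  have hy : 0 < ‖y‖ := norm_pos_iff.2 hy
  have hA_nonneg (s : ℝ) (hs : 0 ≤ s) : 0 ≤ A s :=
    (mul_nonneg hD₁ (Real.rpow_nonneg hs _)).trans (hlow s hs)
  have hlow' : D₁ * ‖y‖ ^ (p - 2) ≤ A ‖y‖ / ‖y‖ := by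
    rw [le_div_iff₀ hy, mul_assoc, ← Real.rpow_add_one hy.ne', show p - 2 + 1 = p - 1 by ring]
    exact hlow _ hy.le
  calc α / 2 * D₁ * 2 ^ (2 - p) * ‖y - x‖ ^ p
      = α / 2 * D₁ * (2 ^ (2 - p) * ‖y - x‖ ^ p) := by ring
    _ ≤ α / 2 * D₁ * (‖y‖ ^ (p - 2) * ‖y - x‖ ^ 2) := by
        refine mul_le_mul_of_nonneg_left
          (two_rpow_mul_rpow_le_rpow_mul_sq hp (norm_nonneg _) ?_) (by positivity)
        linarith [norm_sub_le y x]
    _ = α / 2 * (D₁ * ‖y‖ ^ (p - 2)) * ‖y - x‖ ^ 2 := by ring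
    _ ≤ α / 2 * (A ‖y‖ / ‖y‖) * ‖y - x‖ ^ 2 := by gcongr
    _ ≤ _ := half_mul_div_mul_norm_sub_sq_le_inner hα0 hα1 hA0 hA_nonneg
        (fun a b ha hab => mul_div_mul_sub_le_sub_of_mul_le_mul_deriv hα0 hα1 hA0 hA hgrow
          ha hab (hA_nonneg b (ha.trans hab))) hxy

end InnerProductSpace

theorem stmt0_general (n : ℕ) (p α D₁ : ℝ) (hp : 2 ≤ p) (hα0 : 0 < α) (hα1 : α ≤ 1)
    (hD₁ : 0 < D₁) (A : ℝ → ℝ)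
    (hAC1 : ∀ s : ℝ, 0 < s → DifferentiableAt ℝ A s)
    (hA0 : A 0 = 0)
    (hgrow : ∀ s : ℝ, 0 < s → α * A s ≤ s * deriv A s)
    (hlow : ∀ s : ℝ, 0 ≤ s → D₁ * s ^ (p - 1) ≤ A s)
    (𝒜 : EuclideanSpace ℝ (Fin n) → EuclideanSpace ℝ (Fin n))
    (h𝒜0 : 𝒜 0 = 0)
    (h𝒜 : ∀ v : EuclideanSpace ℝ (Fin n), v ≠ 0 → 𝒜 v = (A ‖v‖ / ‖v‖) • v) :
    ∃ c₁ : ℝ, 0 < c₁ ∧ ∀ v₁ v₂ : EuclideanSpace ℝ (Fin n),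
      c₁ * ‖v₂ - v₁‖ ^ p ≤ ⟪𝒜 v₂ - 𝒜 v₁, v₂ - v₁⟫ := by
  have h𝒜_eq (v : EuclideanSpace ℝ (Fin n)) : 𝒜 v = (A ‖v‖ / ‖v‖) • v := by
    rcases eq_or_ne v 0 with rfl | hv
    · rw [h𝒜0, smul_zero]
    · exact h𝒜 v hv
  have hmono (x y : EuclideanSpace ℝ (Fin n)) (hxy : ‖x‖ ≤ ‖y‖) :
      α / 2 * D₁ * 2 ^ (2 - p) * ‖y - x‖ ^ p ≤ ⟪𝒜 y - 𝒜 x, y - x⟫ := by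
    rw [h𝒜_eq, h𝒜_eq]
    exact mul_norm_sub_rpow_le_inner_radial hp hα0.le hα1 hD₁.le hA0 hAC1 hgrow hlow hxy
  refine ⟨α / 2 * D₁ * 2 ^ (2 - p), by positivity, fun v₁ v₂ => ?_⟩
  rcases le_total ‖v₁‖ ‖v₂‖ with h | h
  · exact hmono v₁ v₂ h
  · rw [norm_sub_rev, ← inner_neg_neg, neg_sub, neg_sub]
    exact hmono v₂ v₁ h

theorem stmt0 (n : ℕ) (p α D₁ : ℝ) (hp : 2 ≤ p) (hα0 : 0 < α) (hα1 : α ≤ 1)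
    (hD₁ : 0 < D₁) (A : ℝ → ℝ)
    (hAcont : ContinuousOn A (Set.Ici 0))
    (hAC1 : ∀ s : ℝ, 0 < s → DifferentiableAt ℝ A s)
    (hA0 : A 0 = 0) (hApos : ∀ s : ℝ, 0 < s → 0 < A s)
    (hgrow : ∀ s : ℝ, 0 < s → α * A s ≤ s * deriv A s)
    (hlow : ∀ s : ℝ, 0 ≤ s → D₁ * s ^ (p - 1) ≤ A s)
    (𝒜 : EuclideanSpace ℝ (Fin n) → EuclideanSpace ℝ (Fin n))
    (h𝒜0 : 𝒜 0 = 0)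
    (h𝒜 : ∀ v : EuclideanSpace ℝ (Fin n), v ≠ 0 → 𝒜 v = (A ‖v‖ / ‖v‖) • v) :
    ∃ c₁ : ℝ, 0 < c₁ ∧ ∀ v₁ v₂ : EuclideanSpace ℝ (Fin n),
      c₁ * ‖v₂ - v₁‖ ^ p ≤ ⟪𝒜 v₂ - 𝒜 v₁, v₂ - v₁⟫ :=
  stmt0_general n p α D₁ hp hα0 hα1 hD₁ A hAC1 hA0 hgrow hlow 𝒜 h𝒜0 h𝒜
end

section
/- Let u, v : ℝⁿ \ K → ℝ be continuous, where K is compact, and suppose u satisfies the maximum principle on bounded open subsets of ℝⁿ \ K (i.e. sup over any bounded open set with closure in the domain is attained on its boundary). Suppose there is a sequence R_k → ∞ and a constant C with sup_{R_k ≤ |x| ≤ R_k²} |u(x)|^p · Q_k ≤ C where Q_k → +∞. Then sup_{|x| = R_k} |u| → 0, and consequently u is bounded on ℝⁿ \ K with |u| ≤ max{ sup_k sup_{|x|=R_k} |u|, max_{∂K} |u| }. -/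
/-!
If `sup |u|^p · Q_k ≤ C` on the annuli `R_k ≤ |x| ≤ R_k²` with `Q_k → ∞` and `p > 0`, the
suprema over the annuli, hence over the spheres `|x| = R_k` they contain, tend to `0`. Once the
sphere `|x| = R_k` encloses both `K` and a given point `x`, the maximum principle on the bounded
open set `{|y| < R_k} \ K`, whose frontier lies in the sphere and in `∂K`, bounds `|u x|`.
-/

open Filter Metric Topology

theorem tendsto_zero_of_rpow_mul_le {ι : Type*} {l : Filter ι} {s Q : ι → ℝ} {p C : ℝ}
    (hp : 0 < p) (hs : ∀ k, 0 ≤ s k) (hQ : Tendsto Q l atTop)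
    (h : ∀ᶠ k in l, s k ^ p * Q k ≤ C) : Tendsto s l (𝓝 0) := by
  have hpow : Tendsto (fun k => s k ^ p) l (𝓝 0) := by
    refine squeeze_zero' (.of_forall fun k => Real.rpow_nonneg (hs k) p) ?_
      ((tendsto_const_nhds (x := C)).div_atTop hQ)
    filter_upwards [h, hQ.eventually_gt_atTop 0] with k hk hQk
    rwa [le_div_iff₀ hQk]
  have hroot := hpow.rpow_const (p := p⁻¹) (.inr (inv_nonneg.2 hp.le))
  rw [Real.zero_rpow (inv_ne_zero hp.ne')] at hroot
  simpa only [Real.rpow_rpow_inv (hs _) hp.ne'] using hroot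

section SupAbs

variable {α : Type*} {u : α → ℝ} {s t : Set α}

theorem sSup_abs_image_nonneg : 0 ≤ sSup ((fun x => |u x|) '' s) :=
  Real.sSup_nonneg (by rintro _ ⟨y, -, rfl⟩; exact abs_nonneg _)

theorem sSup_abs_image_mono (hst : s ⊆ t) (ht : BddAbove ((fun x => |u x|) '' t)) :
    sSup ((fun x => |u x|) '' s) ≤ sSup ((fun x => |u x|) '' t) :=
  Real.sSup_le (by rintro _ ⟨y, hy, rfl⟩; exact le_csSup ht ⟨y, hst hy, rfl⟩)
    sSup_abs_image_nonneg

theorem bddAbove_abs_image [TopologicalSpace α] (hu : ContinuousOn u t) (hs : IsCompact s)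
    (hst : s ⊆ t) : BddAbove ((fun x => |u x|) '' s) :=
  (hs.image_of_continuousOn (hu.mono hst).abs).bddAbove

end SupAbs

section NormedSpace

variable {E : Type*} [NormedAddCommGroup E] {K : Set E} {u : E → ℝ} {r : ℝ}

theorem isCompact_annulus [ProperSpace E] (a b : ℝ) : IsCompact {x : E | a ≤ ‖x‖ ∧ ‖x‖ ≤ b} := by
  have h : {x : E | a ≤ ‖x‖ ∧ ‖x‖ ≤ b} = closedBall 0 b \ ball 0 a := by
    ext x; simp [and_comm]
  rw [h]
  exact (isCompact_closedBall 0 b).diff isOpen_ball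

theorem notMem_of_le_norm (hKr : K ⊆ ball 0 r) {x : E} (hx : r ≤ ‖x‖) : x ∉ K :=
  fun hxK => (mem_ball_zero_iff.1 (hKr hxK)).not_ge hx

theorem sSup_abs_sphere_le_annulus [ProperSpace E] (hu : ContinuousOn u (closure Kᶜ))
    (hKr : K ⊆ ball 0 r) {ρ : ℝ} (hrρ : r ≤ ρ) (hρ : 1 ≤ ρ) :
    sSup ((fun x => |u x|) '' sphere (0 : E) ρ) ≤
      sSup ((fun x => |u x|) '' {x : E | ρ ≤ ‖x‖ ∧ ‖x‖ ≤ ρ ^ 2}) := by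
  refine sSup_abs_image_mono (fun y hy => ?_) (bddAbove_abs_image hu (isCompact_annulus _ _) ?_)
  · rw [Set.mem_ofPred_eq, mem_sphere_zero_iff_norm.1 hy]
    constructor <;> nlinarith
  · exact fun y hy => subset_closure (notMem_of_le_norm hKr (hrρ.trans hy.1))

theorem abs_le_max_sSup_sphere_frontier [NormedSpace ℝ E] [ProperSpace E] (hK : IsCompact K)
    (hu : ContinuousOn u (closure Kᶜ))
    (hmax : ∀ U : Set E, IsOpen U → Bornology.IsBounded U → U ⊆ Kᶜ →
      ∀ x ∈ U, |u x| ≤ sSup ((fun y => |u y|) '' frontier U))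
    (hKr : K ⊆ ball 0 r) {x : E} (hx : x ∉ K) (hxr : ‖x‖ < r) :
    |u x| ≤ max (sSup ((fun y => |u y|) '' sphere 0 r))
      (sSup ((fun y => |u y|) '' frontier K)) := by
  have hr : r ≠ 0 := ((norm_nonneg x).trans_lt hxr).ne'
  have hmaxU := hmax (ball 0 r ∩ Kᶜ) (isOpen_ball.inter hK.isClosed.isOpen_compl)
    (isBounded_ball.subset Set.inter_subset_left) Set.inter_subset_right x
    ⟨mem_ball_zero_iff.2 hxr, hx⟩
  refine hmaxU.trans ?_
  refine Real.sSup_le ?_ (le_max_of_le_left sSup_abs_image_nonneg)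
  rintro _ ⟨y, hy, rfl⟩
  rcases frontier_inter_subset _ _ hy with ⟨hy, -⟩ | ⟨-, hy⟩
  · rw [frontier_ball 0 hr] at hy
    have hsphere : sphere (0 : E) r ⊆ closure Kᶜ := fun z hz =>
      subset_closure (notMem_of_le_norm hKr (mem_sphere_zero_iff_norm.1 hz).ge)
    exact le_max_of_le_left
      (le_csSup (bddAbove_abs_image hu (isCompact_sphere 0 r) hsphere) ⟨y, hy, rfl⟩)
  · rw [frontier_compl] at hy
    have hfrontier : frontier K ⊆ closure Kᶜ := frontier_compl K ▸ frontier_subset_closure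
    have hcompact : IsCompact (frontier K) :=
      hK.of_isClosed_subset isClosed_frontier hK.isClosed.frontier_subset
    exact le_max_of_le_right
      (le_csSup (bddAbove_abs_image hu hcompact hfrontier) ⟨y, hy, rfl⟩)

end NormedSpace

theorem stmt12_general (n : ℕ) (p : ℝ) (hp : 1 < p)
    (K : Set (EuclideanSpace ℝ (Fin n))) (hK : IsCompact K)
    (u : EuclideanSpace ℝ (Fin n) → ℝ)
    (hu : ContinuousOn u (closure Kᶜ))
    (hmax : ∀ U : Set (EuclideanSpace ℝ (Fin n)), IsOpen U →
      Bornology.IsBounded U → U ⊆ Kᶜ →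
      ∀ x ∈ U, |u x| ≤ sSup ((fun y => |u y|) '' frontier U))
    (R : ℕ → ℝ) (hR : Tendsto R atTop atTop)
    (Q : ℕ → ℝ) (hQ : Tendsto Q atTop atTop)
    (C : ℝ)
    (hbd : ∀ k, (sSup ((fun x => |u x|) ''
        {x : EuclideanSpace ℝ (Fin n) | R k ≤ ‖x‖ ∧ ‖x‖ ≤ (R k) ^ 2})) ^ p * Q k ≤ C) :
    Tendsto (fun k => sSup ((fun x => |u x|) ''
        Metric.sphere (0 : EuclideanSpace ℝ (Fin n)) (R k))) atTop (nhds 0) ∧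
    ∀ x ∉ K, |u x| ≤ max
      (⨆ k, sSup ((fun x => |u x|) '' Metric.sphere (0 : EuclideanSpace ℝ (Fin n)) (R k)))
      (sSup ((fun y => |u y|) '' frontier K)) := by
  obtain ⟨r, hKr⟩ := hK.isBounded.subset_ball 0
  have hannulus := tendsto_zero_of_rpow_mul_le (zero_lt_one.trans hp)
    (fun _ => sSup_abs_image_nonneg) hQ (.of_forall hbd)
  have hsphere : Tendsto (fun k => sSup ((fun x => |u x|) '' sphere 0 (R k))) atTop (𝓝 0) := by
    refine squeeze_zero' (.of_forall fun _ => sSup_abs_image_nonneg) ?_ hannulus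
    filter_upwards [hR.eventually_ge_atTop (max r 1)] with k hk
    exact sSup_abs_sphere_le_annulus hu hKr (le_of_max_le_left hk) (le_of_max_le_right hk)
  refine ⟨hsphere, fun x hx => ?_⟩
  obtain ⟨k, hk⟩ := (hR.eventually_gt_atTop (max r ‖x‖)).exists
  calc |u x| ≤ max (sSup ((fun y => |u y|) '' sphere 0 (R k)))
        (sSup ((fun y => |u y|) '' frontier K)) :=
        abs_le_max_sSup_sphere_frontier hK hu hmax
          (hKr.trans (ball_subset_ball (le_max_left _ _ |>.trans hk.le))) hx
          ((le_max_right _ _).trans_lt hk)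
    _ ≤ _ := max_le_max_right _ (le_ciSup hsphere.bddAbove_range k)

theorem stmt12 (n : ℕ) (p : ℝ) (hp : 1 < p)
    (K : Set (EuclideanSpace ℝ (Fin n))) (hK : IsCompact K)
    (u v : EuclideanSpace ℝ (Fin n) → ℝ)
    (hu : ContinuousOn u (closure Kᶜ)) (hv : ContinuousOn v (closure Kᶜ))
    (hmax : ∀ U : Set (EuclideanSpace ℝ (Fin n)), IsOpen U →
      Bornology.IsBounded U → U ⊆ Kᶜ →
      ∀ x ∈ U, |u x| ≤ sSup ((fun y => |u y|) '' frontier U))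
    (R : ℕ → ℝ) (hR : Tendsto R atTop atTop)
    (Q : ℕ → ℝ) (hQ : Tendsto Q atTop atTop)
    (C : ℝ)
    (hbd : ∀ k, (sSup ((fun x => |u x|) ''
        {x : EuclideanSpace ℝ (Fin n) | R k ≤ ‖x‖ ∧ ‖x‖ ≤ (R k) ^ 2})) ^ p * Q k ≤ C) :
    Tendsto (fun k => sSup ((fun x => |u x|) ''
        Metric.sphere (0 : EuclideanSpace ℝ (Fin n)) (R k))) atTop (nhds 0) ∧
    ∀ x ∉ K, |u x| ≤ max
      (⨆ k, sSup ((fun x => |u x|) '' Metric.sphere (0 : EuclideanSpace ℝ (Fin n)) (R k)))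
      (sSup ((fun y => |u y|) '' frontier K)) :=
  stmt12_general n p hp K hK u hu hmax R hR Q hQ C hbd
end
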